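/- arXiv:2007.10108 — 2 statements merged into one kernel-verified Lean document; each statement's English description precedes it below -/
import Mathlib

section
/- Let V be in the class 𝒞 and let b ≤ b' and c ≤ c' be real numbers. Then there exists u_0 ∈ ℝ such that ρ_{b',c'}(u) ≤ ρ_{b,c}(u) for all u ≤ u_0 and ρ_{b',c'}(u) ≥ ρ_{b,c}(u) for all u ≥ u_0 (a single-crossing property). Consequently, the distribution functions F_{b,c}(t) = ∫_{−∞}^t ρ_{b,c}(u) du satisfy F_{b,c}(t) ≥ F_{b',c'}(t) for all t ∈ ℝ. -/
open MeasureTheory Filter Real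

noncomputable section

/-- The class 𝒞 of potentials: convex, at most polynomial growth, non-affine
(the asymptotic slopes at `+∞` and `-∞`, taken in the extended reals, differ). -/
structure InClassC (V : ℝ → ℝ) : Prop where
  convex : ConvexOn ℝ Set.univ V
  growth : ∃ C > (0 : ℝ), ∃ K : ℝ, 1 ≤ K ∧ ∀ x : ℝ, |V x| ≤ C * (1 + |x|) ^ K
  slopes : ∃ vm vp : EReal,
    Tendsto (fun x : ℝ => ((V x / x : ℝ) : EReal)) atBot (nhds vm) ∧
    Tendsto (fun x : ℝ => ((V x / x : ℝ) : EReal)) atTop (nhds vp) ∧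
    vm < vp

/-- The resampling density `ρ_{b,c}`. -/
def rho (V : ℝ → ℝ) (b c u : ℝ) : ℝ :=
  Real.exp (-(V (u - b) + V (c - u))) / ∫ s : ℝ, Real.exp (-(V (s - b) + V (c - s)))

/-! With `W_{b,c}(u) = V(u - b) + V(c - u)` (`pairPotential`), the ratio `ρ_{b',c'} / ρ_{b,c}`
is a positive constant times `exp (W_{b,c} - W_{b',c'})`. Convexity makes the increment
`V(x + d) - V x` nondecreasing in `x` for `d ≥ 0`, so this ratio is nondecreasing in `u`. Two
continuous densities of equal mass with a nondecreasing ratio either coincide or, by the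
intermediate value theorem, cross at a point where the ratio is `1`; comparing left tails before
that point and right tails after it gives the inequality of distribution functions. The two
distinct asymptotic slopes `r₁ < r₂` of `V` make `W_{b,c}(u)` grow like `(r₂ - r₁) |u|`, which is
what makes `ρ_{b,c}` a density. -/

open Set Asymptotics

section crossing

lemma eq_of_le_of_integral_eq {X : Type*} [TopologicalSpace X] [MeasurableSpace X]
    [OpensMeasurableSpace X] {μ : Measure X} [μ.IsOpenPosMeasure] {f g : X → ℝ}
    (hf : Continuous f) (hg : Continuous g) (hfi : Integrable f μ) (hgi : Integrable g μ)
    (hle : f ≤ g) (heq : ∫ x, f x ∂μ = ∫ x, g x ∂μ) : f = g := by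
  have hae : g - f =ᵐ[μ] 0 := by
    refine (integral_eq_zero_iff_of_nonneg (fun x => sub_nonneg.2 (hle x)) (hgi.sub hfi)).1 ?_
    rw [integral_sub hgi hfi, heq, sub_self]
  have hzero : g - f = 0 := ((hg.sub hf).ae_eq_iff_eq μ continuous_const).1 hae
  exact (sub_eq_zero.1 hzero).symm

variable {f g : ℝ → ℝ}

lemma exists_crossing_of_monotone_div (hf : Continuous f) (hg : Continuous g)
    (hfi : Integrable f) (hgi : Integrable g) (hpos : ∀ u, 0 < f u)
    (heq : ∫ u, f u = ∫ u, g u) (hmono : Monotone fun u => g u / f u) :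
    ∃ u₀ : ℝ, (∀ u, u ≤ u₀ → g u ≤ f u) ∧ ∀ u, u₀ ≤ u → f u ≤ g u := by
  have hle_iff : ∀ u, g u ≤ f u ↔ g u / f u ≤ 1 := fun u => (div_le_one (hpos u)).symm
  have hge_iff : ∀ u, f u ≤ g u ↔ 1 ≤ g u / f u := fun u => (one_le_div (hpos u)).symm
  by_cases hbelow : ∀ u, g u / f u ≤ 1
  · have hgf := eq_of_le_of_integral_eq hg hf hgi hfi (fun u => (hle_iff u).2 (hbelow u)) heq.symm
    exact ⟨0, fun u _ => (congrFun hgf u).le, fun u _ => (congrFun hgf u).ge⟩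
  by_cases habove : ∀ u, 1 ≤ g u / f u
  · have hfg := eq_of_le_of_integral_eq hf hg hfi hgi (fun u => (hge_iff u).2 (habove u)) heq
    exact ⟨0, fun u _ => (congrFun hfg u).ge, fun u _ => (congrFun hfg u).le⟩
  push Not at hbelow habove
  obtain ⟨a, ha⟩ := habove
  obtain ⟨e, he⟩ := hbelow
  obtain ⟨u₀, hu₀⟩ := intermediate_value_univ a e (hg.div hf fun u => (hpos u).ne') ⟨ha.le, he.le⟩
  exact ⟨u₀, fun u hu => (hle_iff u).2 (hu₀ ▸ hmono hu),
    fun u hu => (hge_iff u).2 (hu₀ ▸ hmono hu)⟩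

lemma setIntegral_Iic_le_of_crossing (hfi : Integrable f) (hgi : Integrable g)
    (heq : ∫ u, f u = ∫ u, g u) {u₀ : ℝ} (hleft : ∀ u, u ≤ u₀ → g u ≤ f u)
    (hright : ∀ u, u₀ ≤ u → f u ≤ g u) (t : ℝ) :
    ∫ u in Iic t, g u ≤ ∫ u in Iic t, f u := by
  rcases le_total t u₀ with ht | ht
  · exact setIntegral_mono_on hgi.integrableOn hfi.integrableOn measurableSet_Iic
      fun u hu => hleft u (le_trans hu ht)
  · have htail : ∫ u in Ioi t, f u ≤ ∫ u in Ioi t, g u :=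
      setIntegral_mono_on hfi.integrableOn hgi.integrableOn measurableSet_Ioi
        fun u hu => hright u (ht.trans (le_of_lt hu))
    have hfsplit := integral_add_compl (measurableSet_Iic (a := t)) hfi
    have hgsplit := integral_add_compl (measurableSet_Iic (a := t)) hgi
    rw [compl_Iic] at hfsplit hgsplit
    linarith

end crossing

lemma ConvexOn.monotone_increment {𝕜 : Type*} [Field 𝕜] [LinearOrder 𝕜] [IsStrictOrderedRing 𝕜]
    {f : 𝕜 → 𝕜} (hf : ConvexOn 𝕜 univ f) {d : 𝕜} (hd : 0 ≤ d) :
    Monotone fun x => f (x + d) - f x := by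
  intro x y hxy
  rcases hd.eq_or_lt with rfl | hd
  · simp
  have hx : x < y + d := by linarith
  calc f (x + d) - f x = d * slope f x (x + d) := by
        rw [slope_def_field, add_sub_cancel_left, mul_div_cancel₀ _ hd.ne']
    _ ≤ d * slope f x (y + d) := by
        gcongr
        exact hf.slope_mono (mem_univ x) ⟨mem_univ _, by simpa using hd.ne'⟩
          ⟨mem_univ _, hx.ne'⟩ (by linarith)
    _ = d * slope f (y + d) x := by rw [slope_comm]
    _ ≤ d * slope f (y + d) y := by
        gcongr
        exact hf.slope_mono (mem_univ _) ⟨mem_univ x, hx.ne⟩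
          ⟨mem_univ y, by simpa using hd.ne'⟩ hxy
    _ = f (y + d) - f y := by
        rw [slope_comm, slope_def_field, add_sub_cancel_left, mul_div_cancel₀ _ hd.ne']

def pairPotential (V : ℝ → ℝ) (b c u : ℝ) : ℝ := V (u - b) + V (c - u)

lemma rho_eq (V : ℝ → ℝ) (b c u : ℝ) :
    rho V b c u = exp (-pairPotential V b c u) / ∫ s, exp (-pairPotential V b c s) := rfl

lemma monotone_pairPotential_sub {V : ℝ → ℝ} (hV : ConvexOn ℝ univ V) {b b' c c' : ℝ}
    (hb : b ≤ b') (hc : c ≤ c') :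
    Monotone fun u => pairPotential V b c u - pairPotential V b' c' u := by
  intro u v huv
  have h₁ := hV.monotone_increment (sub_nonneg.2 hb) (sub_le_sub_right huv b')
  have h₂ := hV.monotone_increment (sub_nonneg.2 hc) (sub_le_sub_left huv c)
  simp only [sub_add_sub_cancel, sub_add_sub_cancel'] at h₁ h₂
  simp only [pairPotential]
  linarith

namespace InClassC

variable {V : ℝ → ℝ}

lemma continuous (hV : InClassC V) : Continuous V :=
  continuousOn_univ.mp (hV.convex.continuousOn isOpen_univ)

lemma exists_eventually_mul_le (hV : InClassC V) :
    ∃ r₁ r₂ : ℝ, r₁ < r₂ ∧ (∀ᶠ x in atBot, r₁ * x ≤ V x) ∧ ∀ᶠ x in atTop, r₂ * x ≤ V x := by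
  obtain ⟨vm, vp, hm, hp, hlt⟩ := hV.slopes
  obtain ⟨r₂, h₂m, h₂p⟩ := EReal.exists_between_coe_real hlt
  obtain ⟨r₁, h₁m, h₁p⟩ := EReal.exists_between_coe_real h₂m
  refine ⟨r₁, r₂, mod_cast h₁p, ?_, ?_⟩
  · filter_upwards [hm.eventually_lt_const h₁m, eventually_lt_atBot 0] with x hx hx0
    exact ((div_lt_iff_of_neg hx0).mp (mod_cast hx)).le
  · filter_upwards [hp.eventually_const_lt h₂p, eventually_gt_atTop 0] with x hx hx0
    exact ((lt_div_iff₀ hx0).mp (mod_cast hx)).le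

lemma continuous_pairPotential (hV : InClassC V) (b c : ℝ) : Continuous (pairPotential V b c) := by
  have := hV.continuous
  unfold pairPotential
  fun_prop

lemma integrable_exp_neg_pairPotential (hV : InClassC V) (b c : ℝ) :
    Integrable fun u => exp (-pairPotential V b c u) := by
  obtain ⟨r₁, r₂, hr, hbot, htop⟩ := hV.exists_eventually_mul_le
  have hcont : Continuous fun u => exp (-pairPotential V b c u) :=
    (hV.continuous_pairPotential b c).neg.rexp
  -- near `-∞`, `pairPotential V b c u ≥ r₁ (u - b) + r₂ (c - u)`; near `+∞` the slopes swap
  refine hcont.locallyIntegrable.integrable_of_isBigO_atBot_atTop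
    (g := fun u => exp ((r₂ - r₁) * u)) ?_
    ⟨Iic 0, Iic_mem_atBot 0, integrableOn_exp_mul_Iic (sub_pos.2 hr) 0⟩
    (g' := fun u => exp ((r₁ - r₂) * u)) ?_
    ⟨Ioi 0, Ioi_mem_atTop 0, integrableOn_exp_mul_Ioi (sub_neg.2 hr) 0⟩
  · have hleft : Tendsto (fun u : ℝ => u - b) atBot atBot :=
      tendsto_atBot_atBot.2 fun a => ⟨a + b, fun u hu => by linarith⟩
    have hright : Tendsto (fun u : ℝ => c - u) atBot atTop :=
      tendsto_atBot_atTop.2 fun a => ⟨c - a, fun u hu => by linarith⟩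
    refine IsBigO.of_bound (exp (r₁ * b - r₂ * c)) ?_
    filter_upwards [hleft.eventually hbot, hright.eventually htop] with u h₁ h₂
    rw [norm_of_nonneg (exp_pos _).le, norm_of_nonneg (exp_pos _).le, ← exp_add, exp_le_exp]
    unfold pairPotential
    linarith
  · have hleft : Tendsto (fun u : ℝ => u - b) atTop atTop :=
      tendsto_atTop_atTop.2 fun a => ⟨a + b, fun u hu => by linarith⟩
    have hright : Tendsto (fun u : ℝ => c - u) atTop atBot :=
      tendsto_atTop_atBot.2 fun a => ⟨c - a, fun u hu => by linarith⟩
    refine IsBigO.of_bound (exp (r₂ * b - r₁ * c)) ?_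
    filter_upwards [hleft.eventually htop, hright.eventually hbot] with u h₁ h₂
    rw [norm_of_nonneg (exp_pos _).le, norm_of_nonneg (exp_pos _).le, ← exp_add, exp_le_exp]
    unfold pairPotential
    linarith

lemma integral_exp_neg_pairPotential_pos (hV : InClassC V) (b c : ℝ) :
    0 < ∫ u, exp (-pairPotential V b c u) :=
  integral_exp_pos (hV.integrable_exp_neg_pairPotential b c)

lemma rho_pos (hV : InClassC V) (b c u : ℝ) : 0 < rho V b c u :=
  div_pos (exp_pos _) (hV.integral_exp_neg_pairPotential_pos b c)

lemma continuous_rho (hV : InClassC V) (b c : ℝ) : Continuous (rho V b c) :=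
  (hV.continuous_pairPotential b c).neg.rexp.div_const _

lemma integrable_rho (hV : InClassC V) (b c : ℝ) : Integrable (rho V b c) :=
  (hV.integrable_exp_neg_pairPotential b c).div_const _

lemma integral_rho (hV : InClassC V) (b c : ℝ) : ∫ u, rho V b c u = 1 := by
  simp only [rho_eq]
  rw [integral_div, div_self (hV.integral_exp_neg_pairPotential_pos b c).ne']

lemma rho_div_rho (hV : InClassC V) (b c b' c' u : ℝ) :
    rho V b' c' u / rho V b c u =
      exp (pairPotential V b c u - pairPotential V b' c' u) *
        ((∫ s, exp (-pairPotential V b c s)) / ∫ s, exp (-pairPotential V b' c' s)) := by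
  have hZ := (hV.integral_exp_neg_pairPotential_pos b c).ne'
  have hZ' := (hV.integral_exp_neg_pairPotential_pos b' c').ne'
  rw [rho_eq, rho_eq, sub_eq_neg_add, exp_add, exp_neg (pairPotential V b c u)]
  field_simp

lemma monotone_rho_div_rho (hV : InClassC V) {b b' c c' : ℝ} (hb : b ≤ b') (hc : c ≤ c') :
    Monotone fun u => rho V b' c' u / rho V b c u := by
  simp only [hV.rho_div_rho b c b' c']
  exact (exp_monotone.comp (monotone_pairPotential_sub hV.convex hb hc)).mul_const
    (div_pos (hV.integral_exp_neg_pairPotential_pos b c)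
      (hV.integral_exp_neg_pairPotential_pos b' c')).le

end InClassC

/-- **Single-crossing property of the resampling densities.** For `V ∈ 𝒞`, `b ≤ b'` and `c ≤ c'`,
the densities `ρ_{b',c'}` and `ρ_{b,c}` cross exactly once: there is `u₀` with
`ρ_{b',c'} ≤ ρ_{b,c}` on `(-∞,u₀]` and `ρ_{b',c'} ≥ ρ_{b,c}` on `[u₀,∞)`. Consequently the
distribution functions satisfy `F_{b,c}(t) ≥ F_{b',c'}(t)` for all `t`. -/
theorem single_crossing (V : ℝ → ℝ) (hV : InClassC V) (b b' c c' : ℝ)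
    (hb : b ≤ b') (hc : c ≤ c') :
    (∃ u₀ : ℝ, (∀ u : ℝ, u ≤ u₀ → rho V b' c' u ≤ rho V b c u) ∧
      (∀ u : ℝ, u₀ ≤ u → rho V b c u ≤ rho V b' c' u)) ∧
    ∀ t : ℝ, (∫ u in Set.Iic t, rho V b' c' u) ≤ ∫ u in Set.Iic t, rho V b c u := by
  have hmass : ∫ u, rho V b c u = ∫ u, rho V b' c' u := by
    rw [hV.integral_rho, hV.integral_rho]
  obtain ⟨u₀, hleft, hright⟩ := exists_crossing_of_monotone_div (hV.continuous_rho b c)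
    (hV.continuous_rho b' c') (hV.integrable_rho b c) (hV.integrable_rho b' c') (hV.rho_pos b c)
    hmass (hV.monotone_rho_div_rho hb hc)
  exact ⟨⟨u₀, hleft, hright⟩, setIntegral_Iic_le_of_crossing (hV.integrable_rho b c)
    (hV.integrable_rho b' c') hmass hleft hright⟩
end
end

section
/- (Conditional stochastic domination.) Let V be in the class 𝒞, N ≥ 2, and let A, B ⊂ Ω_N be increasing Borel sets of positive π_N-measure such that whenever x ∈ A and y ∈ B one has min(x,y) ∈ B, where min(x,y)_i := min(x_i,y_i). Then π_N(·|A) stochastically dominates π_N(·|B): for every bounded measurable increasing function f : Ω_N → ℝ, π_N(f | A) ≥ π_N(f | B). -/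
/-
The Gibbs measure `π_N` is the image, under the lattice embedding `conf N` of `ℝ^{N-1}` into
configurations, of a measure with density `e^{-H}` with respect to Lebesgue measure. Convexity of
`V` makes `(a, a') ↦ V (a' - a)` submodular on `ℝ²`, hence `H` submodular and `e^{-H}`
log-supermodular. Lebesgue measure on `ℝ` satisfies the Ahlswede–Daykin four functions inequality
(symmetrise the double integral over `{y < x}` and compare pointwise), the inequality tensorises
over products, and survives log-supermodular densities and lattice homomorphisms, so it holds for
`π_N`. Applied to `(f + M) 1_A, 1_B, (f + M) 1_B, 1_A` — the hypotheses on `A` and `B` give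
`x ∈ B, y ∈ A → x ⊔ y ∈ A, x ⊓ y ∈ B` — it yields
`π_N((f + M) 1_B) π_N(A) ≤ π_N((f + M) 1_A) π_N(B)`.
-/

open MeasureTheory Filter Real
open scoped ENNReal

noncomputable section

/-- Configuration in `Ω_N` built from the `N-1` inner coordinates: coordinates
`1,…,N-1` are free, all others (in particular `0` and `N`) vanish. -/
def conf (N : ℕ) (y : Fin (N - 1) → ℝ) : ℕ → ℝ := fun k =>
  if h : 1 ≤ k ∧ k ≤ N - 1 then y ⟨k - 1, by omega⟩ else 0

/-- The Hamiltonian `H(x) = Σ_{k=1}^N V(x_k - x_{k-1})`. -/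
def Ham (V : ℝ → ℝ) (N : ℕ) (x : ℕ → ℝ) : ℝ :=
  ∑ k ∈ Finset.range N, V (x (k + 1) - x k)

/-- Normalisation constant `Z_N`. -/
def Zpart (V : ℝ → ℝ) (N : ℕ) : ℝ :=
  ∫ y : Fin (N - 1) → ℝ, Real.exp (-(Ham V N (conf N y)))

/-- The Gibbs measure `π_N` on `Ω_N`, viewed as a measure on configurations `ℕ → ℝ`:
the inner coordinates have density `e^{-H}/Z_N` w.r.t. Lebesgue measure. -/
def piN (V : ℝ → ℝ) (N : ℕ) : Measure (ℕ → ℝ) :=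
  Measure.map (conf N)
    (volume.withDensity fun y : Fin (N - 1) → ℝ =>
      ENNReal.ofReal (Real.exp (-(Ham V N (conf N y))) / Zpart V N))

theorem ENNReal.add_le_add_of_mul_le_mul {p q s t : ℝ≥0∞} (hp : p ≤ s) (hq : q ≤ s)
    (hpq : p * q ≤ s * t) : p + q ≤ s + t := by
  rcases eq_or_ne s ⊤ with rfl | hs
  · simp
  rcases eq_or_ne t ⊤ with rfl | ht
  · simp
  lift s to NNReal using hs
  lift t to NNReal using ht
  lift p to NNReal using ne_top_of_le_ne_top ENNReal.coe_ne_top hp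
  lift q to NNReal using ne_top_of_le_ne_top ENNReal.coe_ne_top hq
  norm_cast at *
  rcases eq_or_ne s 0 with rfl | hs0
  · simp_all
  rw [← NNReal.coe_le_coe] at *
  push_cast at *
  have hs : (0 : ℝ) < s := by positivity
  nlinarith [mul_nonneg (sub_nonneg.2 hp) (sub_nonneg.2 hq)]

theorem MeasureTheory.Measure.prod_diagonal_eq_zero {α : Type*} [MeasurableSpace α]
    [MeasurableEq α] (μ ν : Measure α) [SFinite ν] [NullSingletonClass ν] :
    μ.prod ν (Set.diagonal α) = 0 := by
  rw [Measure.prod_apply measurableSet_diagonal]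
  simp [Set.preimage, Set.diagonal]

/-- The conclusion of the Ahlswede–Daykin four functions theorem (`four_functions_theorem`), for a
measure. -/
def FourFunctionsProperty {X : Type*} [MeasurableSpace X] [Lattice X] (μ : Measure X) : Prop :=
  ∀ α β γ δ : X → ℝ≥0∞, Measurable α → Measurable β → Measurable γ → Measurable δ →
    (∀ x y, γ x * δ y ≤ α (x ⊔ y) * β (x ⊓ y)) →
    (∫⁻ x, γ x ∂μ) * ∫⁻ x, δ x ∂μ ≤ (∫⁻ x, α x ∂μ) * ∫⁻ x, β x ∂μ

namespace FourFunctionsProperty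

section

variable {X Y : Type*} [MeasurableSpace X] [MeasurableSpace Y] [Lattice X] [Lattice Y]
  {μ : Measure X} {ν : Measure Y} {A B : Set X}

theorem map (hμ : FourFunctionsProperty μ) {F : Type*} [FunLike F X Y] [LatticeHomClass F X Y]
    (φ : F) (hφ : Measurable φ) : FourFunctionsProperty (μ.map φ) := by
  intro α β γ δ hα hβ hγ hδ h
  simp only [lintegral_map hα hφ, lintegral_map hβ hφ, lintegral_map hγ hφ, lintegral_map hδ hφ]
  refine hμ _ _ _ _ (hα.comp hφ) (hβ.comp hφ) (hγ.comp hφ) (hδ.comp hφ) fun x y => ?_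
  simpa only [Function.comp_apply, map_sup φ, map_inf φ] using h (φ x) (φ y)

theorem withDensity (hμ : FourFunctionsProperty μ) {d : X → ℝ≥0∞} (hd : Measurable d)
    (hd_mul : ∀ x y, d x * d y ≤ d (x ⊔ y) * d (x ⊓ y)) :
    FourFunctionsProperty (μ.withDensity d) := by
  intro α β γ δ hα hβ hγ hδ h
  simp only [lintegral_withDensity_eq_lintegral_mul _ hd, hα, hβ, hγ, hδ, Pi.mul_apply]
  refine hμ _ _ _ _ (hd.mul hα) (hd.mul hβ) (hd.mul hγ) (hd.mul hδ) fun x y => ?_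
  calc d x * γ x * (d y * δ y) = γ x * δ y * (d x * d y) := by ring
    _ ≤ α (x ⊔ y) * β (x ⊓ y) * (d (x ⊔ y) * d (x ⊓ y)) := mul_le_mul' (h x y) (hd_mul x y)
    _ = d (x ⊔ y) * α (x ⊔ y) * (d (x ⊓ y) * β (x ⊓ y)) := by ring

theorem prod [SFinite ν] (hμ : FourFunctionsProperty μ) (hν : FourFunctionsProperty ν) :
    FourFunctionsProperty (μ.prod ν) := by
  intro α β γ δ hα hβ hγ hδ h
  rw [lintegral_prod _ hα.aemeasurable, lintegral_prod _ hβ.aemeasurable,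
    lintegral_prod _ hγ.aemeasurable, lintegral_prod _ hδ.aemeasurable]
  refine hμ _ _ _ _ hα.lintegral_prod_right' hβ.lintegral_prod_right'
    hγ.lintegral_prod_right' hδ.lintegral_prod_right' fun s t => ?_
  refine hν _ _ _ _ (hα.comp measurable_prodMk_left) (hβ.comp measurable_prodMk_left)
    (hγ.comp measurable_prodMk_left) (hδ.comp measurable_prodMk_left) fun x y => ?_
  exact h (s, x) (t, y)

theorem setLIntegral_mul_le (hμ : FourFunctionsProperty μ) (hA : MeasurableSet A)
    (hB : MeasurableSet B) (hA_upper : IsUpperSet A) (hAB : ∀ x ∈ A, ∀ y ∈ B, x ⊓ y ∈ B)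
    {g : X → ℝ≥0∞} (hg : Measurable g) (hg_mono : Monotone g) :
    (∫⁻ x in B, g x ∂μ) * μ A ≤ (∫⁻ x in A, g x ∂μ) * μ B := by
  rw [← lintegral_indicator hA, ← lintegral_indicator hB, ← lintegral_indicator_one hA,
    ← lintegral_indicator_one hB]
  refine hμ _ _ _ _ (hg.indicator hA) (measurable_one.indicator hB) (hg.indicator hB)
    (measurable_one.indicator hA) fun x y => ?_
  by_cases hx : x ∈ B
  · by_cases hy : y ∈ A
    · have hsup : x ⊔ y ∈ A := hA_upper le_sup_right hy
      have hinf : x ⊓ y ∈ B := inf_comm y x ▸ hAB y hy x hx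
      simpa [hx, hy, hsup, hinf] using hg_mono le_sup_left
    · simp [hy]
  · simp [hx]

theorem setIntegral_mul_measureReal_le [IsFiniteMeasure μ] (hμ : FourFunctionsProperty μ)
    (hA : MeasurableSet A) (hB : MeasurableSet B) (hA_upper : IsUpperSet A)
    (hAB : ∀ x ∈ A, ∀ y ∈ B, x ⊓ y ∈ B) {f : X → ℝ} (hf : Measurable f)
    (hf_bdd : ∃ M, ∀ x, |f x| ≤ M) (hf_mono : Monotone f) :
    (∫ x in B, f x ∂μ) * μ.real A ≤ (∫ x in A, f x ∂μ) * μ.real B := by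
  obtain ⟨M, hM⟩ := hf_bdd
  have hfM : ∀ x, 0 ≤ f x + M := fun x => by linarith [neg_abs_le (f x), hM x]
  have hfi : ∀ S, Integrable f (μ.restrict S) := fun S =>
    Integrable.mono' (integrable_const M) hf.aestronglyMeasurable
      (ae_of_all _ fun x => (Real.norm_eq_abs (f x)).trans_le (hM x))
  have hint : ∀ S, Integrable (fun x => f x + M) (μ.restrict S) := fun S =>
    (hfi S).add (integrable_const M)
  have hlint : ∀ S, ∫⁻ x in S, ENNReal.ofReal (f x + M) ∂μ =
      ENNReal.ofReal (∫ x in S, (f x + M) ∂μ) := fun S =>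
    (ofReal_integral_eq_lintegral_ofReal (hint S) (ae_of_all _ hfM)).symm
  have hshift : ∀ S, ∫ x in S, (f x + M) ∂μ = (∫ x in S, f x ∂μ) + M * μ.real S := fun S => by
    rw [integral_add (hfi S) (integrable_const M), setIntegral_const, smul_eq_mul, mul_comm]
  have h := hμ.setLIntegral_mul_le hA hB hA_upper hAB (g := fun x => ENNReal.ofReal (f x + M))
    (ENNReal.measurable_ofReal.comp (hf.add_const M))
    fun x y hxy => ENNReal.ofReal_le_ofReal (by linarith [hf_mono hxy])
  rw [hlint, hlint, ← ofReal_measureReal, ← ofReal_measureReal,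
    ← ENNReal.ofReal_mul (integral_nonneg hfM), ← ENNReal.ofReal_mul (integral_nonneg hfM),
    ENNReal.ofReal_le_ofReal_iff (mul_nonneg (integral_nonneg hfM) measureReal_nonneg),
    hshift, hshift] at h
  linear_combination h

end

theorem pi {n : ℕ} {X : Fin n → Type*} [∀ i, MeasurableSpace (X i)]
    [∀ i, Lattice (X i)] {μ : ∀ i, Measure (X i)} [∀ i, SigmaFinite (μ i)]
    (hμ : ∀ i, FourFunctionsProperty (μ i)) : FourFunctionsProperty (Measure.pi μ) := by
  induction n with
  | zero =>
    intro α β γ δ hα hβ hγ hδ h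
    rw [Measure.pi_of_empty μ isEmptyElim]
    simp only [lintegral_dirac' _ hα, lintegral_dirac' _ hβ, lintegral_dirac' _ hγ,
      lintegral_dirac' _ hδ]
    simpa only [sup_idem, inf_idem] using h isEmptyElim isEmptyElim
  | succ n ih =>
    have hsplit : Measure.pi μ =
        ((μ 0).prod (Measure.pi fun j => μ (Fin.succ j))).map (Fin.insertNthOrderIso X 0) :=
      (measurePreserving_piFinSuccAbove μ 0).symm.map_eq.symm
    rw [hsplit]
    exact ((hμ 0).prod (ih fun j => hμ _)).map _
      (MeasurableEquiv.piFinSuccAbove X 0).symm.measurable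

end FourFunctionsProperty

theorem lintegral_mul_lintegral_eq_setLIntegral_lt (μ : Measure ℝ) [SigmaFinite μ]
    [NullSingletonClass μ] {g h : ℝ → ℝ≥0∞} (hg : Measurable g) (hh : Measurable h) :
    (∫⁻ x, g x ∂μ) * ∫⁻ x, h x ∂μ =
      ∫⁻ p in {p : ℝ × ℝ | p.2 < p.1}, g p.1 * h p.2 + g p.2 * h p.1 ∂μ.prod μ := by
  have hlt : MeasurableSet {p : ℝ × ℝ | p.2 < p.1} := measurableSet_lt measurable_snd measurable_fst
  have hgt : MeasurableSet {p : ℝ × ℝ | p.1 < p.2} := measurableSet_lt measurable_fst measurable_snd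
  have hgh : Measurable fun p : ℝ × ℝ => g p.1 * h p.2 :=
    (hg.comp measurable_fst).mul (hh.comp measurable_snd)
  -- off the null diagonal, the complement of `{y < x}` is `{x < y}`
  have hcompl : ({p : ℝ × ℝ | p.2 < p.1}ᶜ : Set (ℝ × ℝ)) =ᵐ[μ.prod μ] {p : ℝ × ℝ | p.1 < p.2} := by
    have hdiag : ∀ᵐ p ∂μ.prod μ, p ∉ Set.diagonal ℝ :=
      measure_eq_zero_iff_ae_notMem.1 (Measure.prod_diagonal_eq_zero μ μ)
    filter_upwards [hdiag] with p hp
    simp only [eq_iff_iff]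
    exact not_lt.trans (Ne.le_iff_lt hp)
  have hswap : ∫⁻ p in {p : ℝ × ℝ | p.1 < p.2}, g p.1 * h p.2 ∂μ.prod μ =
      ∫⁻ p in {p : ℝ × ℝ | p.2 < p.1}, g p.2 * h p.1 ∂μ.prod μ := by
    conv_lhs => rw [← Measure.prod_swap]
    rw [setLIntegral_map hgt hgh measurable_swap]
    rfl
  rw [← lintegral_prod_mul hg.aemeasurable hh.aemeasurable, ← lintegral_add_compl _ hlt,
    Measure.restrict_congr_set hcompl, hswap, lintegral_add_left hgh]

theorem fourFunctionsProperty_of_nullSingletonClass (μ : Measure ℝ) [SigmaFinite μ]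
    [NullSingletonClass μ] : FourFunctionsProperty μ := by
  intro α β γ δ hα hβ hγ hδ h
  rw [lintegral_mul_lintegral_eq_setLIntegral_lt μ hγ hδ,
    lintegral_mul_lintegral_eq_setLIntegral_lt μ hα hβ]
  refine setLIntegral_mono' (measurableSet_lt measurable_snd measurable_fst) fun p hp => ?_
  obtain ⟨x, y⟩ := p
  have hyx : y ≤ x := le_of_lt hp
  have hx_y := h x y
  have hy_x := h y x
  have hxx := h x x
  have hyy := h y y
  simp only [sup_of_le_left hyx, inf_of_le_right hyx, sup_of_le_right hyx, inf_of_le_left hyx,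
    sup_idem, inf_idem] at hx_y hy_x hxx hyy
  refine ENNReal.add_le_add_of_mul_le_mul hx_y hy_x ?_
  calc γ x * δ y * (γ y * δ x) = γ x * δ x * (γ y * δ y) := by ring
    _ ≤ α x * β x * (α y * β y) := mul_le_mul' hxx hyy
    _ = α x * β y * (α y * β x) := by ring

theorem fourFunctionsProperty_volume_pi (n : ℕ) :
    FourFunctionsProperty (volume : Measure (Fin n → ℝ)) :=
  FourFunctionsProperty.pi fun _ => fourFunctionsProperty_of_nullSingletonClass volume

theorem ConvexOn.map_add_map_le_of_add_eq {s : Set ℝ} {f : ℝ → ℝ} (hf : ConvexOn ℝ s f)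
    {u v x y : ℝ} (hu : u ∈ s) (hv : v ∈ s) (hux : u ≤ x) (hxv : x ≤ v) (hxy : x + y = u + v) :
    f x + f y ≤ f u + f v := by
  rcases hux.eq_or_lt with rfl | hux
  · obtain rfl : y = v := by linarith
    rfl
  set θ := (x - u) / (v - u)
  have hvu : 0 < v - u := by linarith
  have hθ : θ * (v - u) = x - u := div_mul_cancel₀ _ hvu.ne'
  have hθ0 : 0 ≤ θ := div_nonneg (by linarith) hvu.le
  have hθ1 : θ ≤ 1 := (div_le_one hvu).2 (by linarith)
  have hx := hf.2 hu hv (sub_nonneg.2 hθ1) hθ0 (sub_add_cancel 1 θ)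
  have hy := hf.2 hu hv hθ0 (sub_nonneg.2 hθ1) (add_sub_cancel θ 1)
  simp only [smul_eq_mul] at hx hy
  rw [show (1 - θ) * u + θ * v = x by linarith] at hx
  rw [show θ * u + (1 - θ) * v = y by linarith] at hy
  linarith

theorem ConvexOn.map_sub_sup_add_map_sub_inf_le {V : ℝ → ℝ} (hV : ConvexOn ℝ Set.univ V)
    (a a' b b' : ℝ) : V (a' ⊔ b' - a ⊔ b) + V (a' ⊓ b' - a ⊓ b) ≤ V (a' - a) + V (b' - b) := by
  rcases le_total a b with hab | hba <;> rcases le_total a' b' with hab' | hba'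
  · simp [hab, hab', add_comm]
  · simpa [hab, hba', add_comm] using
      hV.map_add_map_le_of_add_eq (Set.mem_univ (b' - b)) (Set.mem_univ (a' - a))
        (x := a' - b) (y := b' - a) (by linarith) (by linarith) (by ring)
  · simpa [hba, hab'] using
      hV.map_add_map_le_of_add_eq (Set.mem_univ (a' - a)) (Set.mem_univ (b' - b))
        (x := b' - a) (y := a' - b) (by linarith) (by linarith) (by ring)
  · simp [hba, hba']

theorem Ham_sup_add_Ham_inf_le {V : ℝ → ℝ} (hV : ConvexOn ℝ Set.univ V) (N : ℕ)
    (x y : ℕ → ℝ) : Ham V N (x ⊔ y) + Ham V N (x ⊓ y) ≤ Ham V N x + Ham V N y := by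
  simp only [Ham, ← Finset.sum_add_distrib]
  exact Finset.sum_le_sum fun k _ =>
    hV.map_sub_sup_add_map_sub_inf_le (x k) (x (k + 1)) (y k) (y (k + 1))

theorem measurable_conf (N : ℕ) : Measurable (conf N) := by
  refine measurable_pi_lambda _ fun k => ?_
  unfold conf
  split_ifs
  exacts [measurable_pi_apply _, measurable_const]

def confLatticeHom (N : ℕ) : LatticeHom (Fin (N - 1) → ℝ) (ℕ → ℝ) where
  toFun := conf N
  map_sup' x y := funext fun k => by by_cases h : 1 ≤ k ∧ k ≤ N - 1 <;> simp [conf, h]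
  map_inf' x y := funext fun k => by by_cases h : 1 ≤ k ∧ k ≤ N - 1 <;> simp [conf, h]

-- If the Boltzmann weight is not integrable, then `Zpart V N = 0` and the density vanishes.
theorem isFiniteMeasure_piN (V : ℝ → ℝ) (N : ℕ) : IsFiniteMeasure (piN V N) := by
  by_cases hint : Integrable fun y : Fin (N - 1) → ℝ => Real.exp (-(Ham V N (conf N y)))
  · have := isFiniteMeasure_withDensity_ofReal (hint.div_const (Zpart V N)).2
    exact Measure.isFiniteMeasure_map _ _
  · simp only [piN, Zpart, integral_undef hint, div_zero, ENNReal.ofReal_zero]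
    rw [← Pi.zero_def, withDensity_zero, Measure.map_zero]
    infer_instance

theorem fourFunctionsProperty_piN {V : ℝ → ℝ} (hV : ConvexOn ℝ Set.univ V) (N : ℕ) :
    FourFunctionsProperty (piN V N) := by
  have hVc : Continuous V := continuousOn_univ.1 (hV.continuousOn isOpen_univ)
  have hH : Measurable fun y => Ham V N (conf N y) :=
    Finset.measurable_sum _ fun k _ => hVc.measurable.comp
      (((measurable_conf N).eval).sub (measurable_conf N).eval)
  refine ((fourFunctionsProperty_volume_pi _).withDensity ?_ fun x y => ?_).map
    (confLatticeHom N) (measurable_conf N)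
  · exact ENNReal.measurable_ofReal.comp ((Real.measurable_exp.comp hH.neg).div_const _)
  have hZ : 0 ≤ Zpart V N := integral_nonneg fun _ => (Real.exp_pos _).le
  have hsup : conf N (x ⊔ y) = conf N x ⊔ conf N y := map_sup (confLatticeHom N) x y
  have hinf : conf N (x ⊓ y) = conf N x ⊓ conf N y := map_inf (confLatticeHom N) x y
  rw [← ENNReal.ofReal_mul (by positivity), ← ENNReal.ofReal_mul (by positivity),
    div_mul_div_comm, div_mul_div_comm, ← Real.exp_add, ← Real.exp_add, hsup, hinf]
  refine ENNReal.ofReal_le_ofReal (div_le_div_of_nonneg_right (Real.exp_le_exp.2 ?_) ?_)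
  · linarith [Ham_sup_add_Ham_inf_le hV N (conf N x) (conf N y)]
  · positivity

theorem conditional_stochastic_domination_general (V : ℝ → ℝ) (hV : InClassC V) (N : ℕ)
    (A B : Set (ℕ → ℝ)) (hAmeas : MeasurableSet A) (hBmeas : MeasurableSet B)
    (hAinc : ∀ x ∈ A, ∀ y : ℕ → ℝ, (∀ k ≤ N, x k ≤ y k) → y ∈ A)
    (hApos : 0 < piN V N A) (hBpos : 0 < piN V N B)
    (hmin : ∀ x ∈ A, ∀ y ∈ B, (fun k => min (x k) (y k)) ∈ B)
    (f : (ℕ → ℝ) → ℝ) (hf : Measurable f) (hfb : ∃ M : ℝ, ∀ x, |f x| ≤ M)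
    (hfm : ∀ x y : ℕ → ℝ, (∀ k ≤ N, x k ≤ y k) → f x ≤ f y) :
    (∫ x in B, f x ∂piN V N) / (piN V N B).toReal ≤
      (∫ x in A, f x ∂piN V N) / (piN V N A).toReal := by
  have := isFiniteMeasure_piN V N
  have hA_upper : IsUpperSet A := fun x y hxy hx => hAinc x hx y fun k _ => hxy k
  have hf_mono : Monotone f := fun x y hxy => hfm x y fun k _ => hxy k
  rw [div_le_div_iff₀ (ENNReal.toReal_pos hBpos.ne' (measure_ne_top _ _))
    (ENNReal.toReal_pos hApos.ne' (measure_ne_top _ _))]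
  exact (fourFunctionsProperty_piN hV.convex N).setIntegral_mul_measureReal_le hAmeas hBmeas
    hA_upper hmin hf hfb hf_mono

/-- **Conditional stochastic domination.** For `V ∈ 𝒞`, `N ≥ 2`, and increasing Borel sets
`A, B` of positive `π_N`-measure such that `x ∈ A, y ∈ B ⟹ min(x,y) ∈ B`, the conditional
measure `π_N(·|A)` stochastically dominates `π_N(·|B)`: for every bounded measurable increasing
`f`, `π_N(f|A) ≥ π_N(f|B)`. -/
theorem conditional_stochastic_domination (V : ℝ → ℝ) (hV : InClassC V) (N : ℕ) (hN : 2 ≤ N)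
    (A B : Set (ℕ → ℝ)) (hAmeas : MeasurableSet A) (hBmeas : MeasurableSet B)
    (hAinc : ∀ x ∈ A, ∀ y : ℕ → ℝ, (∀ k ≤ N, x k ≤ y k) → y ∈ A)
    (hBinc : ∀ x ∈ B, ∀ y : ℕ → ℝ, (∀ k ≤ N, x k ≤ y k) → y ∈ B)
    (hApos : 0 < piN V N A) (hBpos : 0 < piN V N B)
    (hmin : ∀ x ∈ A, ∀ y ∈ B, (fun k => min (x k) (y k)) ∈ B)
    (f : (ℕ → ℝ) → ℝ) (hf : Measurable f) (hfb : ∃ M : ℝ, ∀ x, |f x| ≤ M)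
    (hfm : ∀ x y : ℕ → ℝ, (∀ k ≤ N, x k ≤ y k) → f x ≤ f y) :
    (∫ x in B, f x ∂piN V N) / (piN V N B).toReal ≤
      (∫ x in A, f x ∂piN V N) / (piN V N A).toReal :=
  conditional_stochastic_domination_general V hV N A B hAmeas hBmeas hAinc hApos hBpos hmin f hf hfb
    hfm
end
end
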